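/- In the recursive controller construction with Lyapunov function V_κ(z) := Σ_{j=1}^r W_j(z)^{(c+1)/(c+p_j)}, at every point z ∈ ℝ^r where V_κ is differentiable and z_i ≠ v_{i-1}(z) for all i < r, the following hold: (∂V_κ/∂z_r)(z)·ω_κ(z) ≤ 0, and if ω_κ(z) = 0 then (∂V_κ/∂z_r)(z) = 0. That is, the homogeneous feedback ω_κ satisfies the structural conditions required for robustification against bounded matched perturbations. -/

import Mathlib

/-- The `i`-th coordinate (0-based) of `z ∈ ℝ^r`, extended by `0` out of range. -/
noncomputable def coord (r : ℕ) (z : Fin r → ℝ) (i : ℕ) : ℝ :=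
  if h : i < r then z ⟨i, h⟩ else 0

/-- `Ssum r κ c i z = Σ_{j=1}^{i} |z_j|^{c/p_j}` with `p_j = 1 + (j-1)κ` (paper 1-based
indices; `k` below is the 0-based index `j-1`). -/
noncomputable def Ssum (r : ℕ) (κ c : ℝ) (i : ℕ) (z : Fin r → ℝ) : ℝ :=
  ∑ k ∈ Finset.range i, |coord r z k| ^ (c / (1 + (k : ℝ) * κ))

/-- The recursively defined virtual controls: `v_0 = 0` and
`v_i = -l_i N_i sign(z_i - v_{i-1})` with `N_i = (Ssum_i)^{(p_i+κ)/c}`, `p_i = 1 + (i-1)κ`.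
The feedback is `ω_κ = vrec r κ c l r`. -/
noncomputable def vrec (r : ℕ) (κ c : ℝ) (l : ℕ → ℝ) : ℕ → (Fin r → ℝ) → ℝ
  | 0 => fun _ => 0
  | i + 1 => fun z =>
      -(l (i + 1)) * (Ssum r κ c (i + 1) z) ^ ((1 + (i : ℝ) * κ + κ) / c) *
        Real.sign (coord r z i - vrec r κ c l i z)

/-- `⌊x⌉^β = |x|^β sign(x)`. -/
noncomputable def sgnPow (x β : ℝ) : ℝ := |x| ^ β * Real.sign x

/-- `W_i(z) = (Σ_{j=1}^{i-1} |z_j|^{c/p_j})|z_i - v_{i-1}| +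
|⌊z_i⌉^{c/p_i+1} - ⌊v_{i-1}⌉^{c/p_i+1}|/(c/p_i+1)` (paper 1-based index `i`). -/
noncomputable def Wfun (r : ℕ) (κ c : ℝ) (l : ℕ → ℝ) : ℕ → (Fin r → ℝ) → ℝ
  | 0 => fun _ => 0
  | i + 1 => fun z =>
      Ssum r κ c i z * |coord r z i - vrec r κ c l i z| +
        |sgnPow (coord r z i) (c / (1 + (i : ℝ) * κ) + 1) -
            sgnPow (vrec r κ c l i z) (c / (1 + (i : ℝ) * κ) + 1)| /
          (c / (1 + (i : ℝ) * κ) + 1)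

/-- The dilation `ζ_ε^p` with weights `p_i = 1 + (i-1)κ` (0-based: `p_j = 1 + jκ`). -/
noncomputable def dil (r : ℕ) (κ ε : ℝ) (z : Fin r → ℝ) : Fin r → ℝ :=
  fun j => ε ^ (1 + (j : ℕ) * κ) * z j

/-- The Lyapunov function `V_κ(z) = Σ_{j=1}^{r} W_j(z)^{(c+1)/(c+p_j)}`. -/
noncomputable def Vfun (r : ℕ) (κ c : ℝ) (l : ℕ → ℝ) (z : Fin r → ℝ) : ℝ :=
  ∑ j ∈ Finset.range r, (Wfun r κ c l (j + 1) z) ^ ((c + 1) / (c + 1 + (j : ℝ) * κ))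

/-! Along the coordinate line through `z` in the `z_r` direction only the last summand of `V_κ`
varies, and there it equals `C + (A |s - v| + |⌊s⌉^β - ⌊v⌉^β| / β)^α` with `v = v_{r-1}(z)`:
non-increasing for `s ≤ v` and non-decreasing for `s ≥ v`. Hence `∂V_κ/∂z_r` has the sign of
`z_r - v` and vanishes at the minimum `z_r = v`, whereas `ω_κ = -l_r N_r sign(z_r - v)`.
If `ω_κ = 0` but `z_r ≠ v`, then `N_r = 0`, which forces `z = 0` and hence `z_r = v`. -/
open Set Topology

lemma sgnPow_of_nonneg {x : ℝ} (β : ℝ) (hβ : β ≠ 0) (hx : 0 ≤ x) : sgnPow x β = x ^ β := by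
  rcases hx.eq_or_lt with h | h
  · simp [sgnPow, ← h, Real.zero_rpow hβ]
  · simp [sgnPow, abs_of_pos h, Real.sign_of_pos h]

lemma sgnPow_of_nonpos {x : ℝ} (β : ℝ) (hβ : β ≠ 0) (hx : x ≤ 0) :
    sgnPow x β = -(-x) ^ β := by
  rcases hx.eq_or_lt with h | h
  · simp [sgnPow, h, Real.zero_rpow hβ]
  · rw [sgnPow, abs_of_neg h, Real.sign_of_neg h]; ring

lemma monotone_sgnPow {β : ℝ} (hβ : 0 < β) : Monotone (sgnPow · β) := by
  intro a b hab
  simp only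
  rcases le_or_gt 0 a with ha | ha
  · rw [sgnPow_of_nonneg β hβ.ne' ha, sgnPow_of_nonneg β hβ.ne' (ha.trans hab)]
    exact Real.rpow_le_rpow ha hab hβ.le
  rw [sgnPow_of_nonpos β hβ.ne' ha.le]
  rcases le_or_gt 0 b with hb | hb
  · rw [sgnPow_of_nonneg β hβ.ne' hb]
    have := Real.rpow_nonneg (neg_nonneg.mpr ha.le) β
    have := Real.rpow_nonneg hb β
    linarith
  · rw [sgnPow_of_nonpos β hβ.ne' hb.le, neg_le_neg_iff]
    exact Real.rpow_le_rpow (by linarith) (by linarith) hβ.le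

section Valley

variable {α β : Type*} [Preorder α] [AddCommGroup β] [LinearOrder β] [IsOrderedAddMonoid β]

lemma monotoneOn_abs_sub_Ici {φ : α → β} (hφ : Monotone φ) (v : α) :
    MonotoneOn (fun s => |φ s - φ v|) (Ici v) := by
  intro s₁ hs₁ s₂ _ hs
  simp only
  rw [abs_of_nonneg (sub_nonneg.mpr (hφ hs₁)),
    abs_of_nonneg (sub_nonneg.mpr (hφ (le_trans hs₁ hs)))]
  exact sub_le_sub_right (hφ hs) _

lemma antitoneOn_abs_sub_Iic {φ : α → β} (hφ : Monotone φ) (v : α) :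
    AntitoneOn (fun s => |φ s - φ v|) (Iic v) := by
  intro s₁ _ s₂ hs₂ hs
  simp only
  rw [abs_of_nonpos (sub_nonpos.mpr (hφ hs₂)),
    abs_of_nonpos (sub_nonpos.mpr (hφ (le_trans hs hs₂)))]
  exact neg_le_neg (sub_le_sub_right (hφ hs) _)

end Valley

section Derivative

variable {f : ℝ → ℝ} {s : Set ℝ} {D t v : ℝ}

lemma HasDerivAt.nonneg_of_monotoneOn_of_mem_nhds (hf : HasDerivAt f D t) (hs : s ∈ 𝓝 t)
    (hmono : MonotoneOn f s) : 0 ≤ D :=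
  hf.hasDerivWithinAt.nonneg_of_monotoneOn
    (by simpa using (PerfectSpace.univ_preperfect t (mem_univ t)).nhds_inter hs) hmono

lemma HasDerivAt.nonpos_of_antitoneOn_of_mem_nhds (hf : HasDerivAt f D t) (hs : s ∈ 𝓝 t)
    (hanti : AntitoneOn f s) : D ≤ 0 :=
  hf.hasDerivWithinAt.nonpos_of_antitoneOn
    (by simpa using (PerfectSpace.univ_preperfect t (mem_univ t)).nhds_inter hs) hanti

lemma HasDerivAt.mul_sign_sub_nonneg (hf : HasDerivAt f D t)
    (hmono : MonotoneOn f (Ici v)) (hanti : AntitoneOn f (Iic v)) :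
    0 ≤ D * Real.sign (t - v) := by
  rcases lt_trichotomy t v with htv | rfl | htv
  · rw [Real.sign_of_neg (sub_neg.mpr htv), mul_neg_one, neg_nonneg]
    exact hf.nonpos_of_antitoneOn_of_mem_nhds (Iic_mem_nhds htv) hanti
  · simp
  · rw [Real.sign_of_pos (sub_pos.mpr htv), mul_one]
    exact hf.nonneg_of_monotoneOn_of_mem_nhds (Ici_mem_nhds htv) hmono

lemma HasDerivAt.eq_zero_of_monotoneOn_of_antitoneOn (hf : HasDerivAt f D v)
    (hmono : MonotoneOn f (Ici v)) (hanti : AntitoneOn f (Iic v)) : D = 0 := by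
  have hmin : IsMinOn f univ v := fun s _ => by
    rcases le_total v s with hs | hs
    · exact hmono self_mem_Ici hs hs
    · exact hanti hs self_mem_Iic hs
  exact (hmin.isLocalMin Filter.univ_mem).hasDerivAt_eq_zero hf

end Derivative

lemma DifferentiableAt.hasDerivAt_update {n : ℕ} {f : (Fin n → ℝ) → ℝ} {z : Fin n → ℝ}
    (hf : DifferentiableAt ℝ f z) (i : Fin n) :
    HasDerivAt (fun s => f (Function.update z i s)) (fderiv ℝ f z (Pi.single i 1)) (z i) := by
  have hf' : HasFDerivAt f (fderiv ℝ f z) (Function.update z i (z i)) := by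
    rw [Function.update_eq_self]; exact hf.hasFDerivAt
  exact hf'.comp_hasDerivAt (z i) (_root_.hasDerivAt_update z i (z i))

/-- `W_r` as a function of `s = z_r`, with `A = Σ_{j<r} |z_j|^{c/p_j}`, `v = v_{r-1}(z)` and
`β = c/p_r + 1`. -/
noncomputable def sectionW (A v β s : ℝ) : ℝ := A * |s - v| + |sgnPow s β - sgnPow v β| / β

section SectionW

variable {A v β α : ℝ}

lemma sectionW_nonneg (hA : 0 ≤ A) (hβ : 0 < β) (s : ℝ) : 0 ≤ sectionW A v β s := by
  unfold sectionW; positivity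

lemma monotoneOn_sectionW (hA : 0 ≤ A) (hβ : 0 < β) : MonotoneOn (sectionW A v β) (Ici v) :=
  fun _ h₁ _ h₂ h => add_le_add
    (mul_le_mul_of_nonneg_left (monotoneOn_abs_sub_Ici monotone_id v h₁ h₂ h) hA)
    (div_le_div_of_nonneg_right (monotoneOn_abs_sub_Ici (monotone_sgnPow hβ) v h₁ h₂ h) hβ.le)

lemma antitoneOn_sectionW (hA : 0 ≤ A) (hβ : 0 < β) : AntitoneOn (sectionW A v β) (Iic v) :=
  fun _ h₁ _ h₂ h => add_le_add
    (mul_le_mul_of_nonneg_left (antitoneOn_abs_sub_Iic monotone_id v h₁ h₂ h) hA)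
    (div_le_div_of_nonneg_right (antitoneOn_abs_sub_Iic (monotone_sgnPow hβ) v h₁ h₂ h) hβ.le)

lemma monotoneOn_const_add_sectionW_rpow (C : ℝ) (hA : 0 ≤ A) (hβ : 0 < β) (hα : 0 ≤ α) :
    MonotoneOn (fun s => C + sectionW A v β s ^ α) (Ici v) :=
  fun _ h₁ _ h₂ h => add_le_add_right
    (Real.rpow_le_rpow (sectionW_nonneg hA hβ _) (monotoneOn_sectionW hA hβ h₁ h₂ h) hα) C

lemma antitoneOn_const_add_sectionW_rpow (C : ℝ) (hA : 0 ≤ A) (hβ : 0 < β) (hα : 0 ≤ α) :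
    AntitoneOn (fun s => C + sectionW A v β s ^ α) (Iic v) :=
  fun _ h₁ _ h₂ h => add_le_add_right
    (Real.rpow_le_rpow (sectionW_nonneg hA hβ _) (antitoneOn_sectionW hA hβ h₁ h₂ h) hα) C

end SectionW

section Update

variable {r : ℕ} {κ c : ℝ} {l : ℕ → ℝ} (z : Fin r → ℝ) (i₀ : Fin r) (s : ℝ)

lemma coord_update_of_ne {k : ℕ} (hk : k ≠ i₀) :
    coord r (Function.update z i₀ s) k = coord r z k := by
  unfold coord
  split_ifs with h
  · exact Function.update_of_ne (fun h' => hk (congrArg Fin.val h')) _ _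
  · rfl

lemma coord_coe : coord r z i₀ = z i₀ := by
  rw [coord, dif_pos i₀.isLt]

lemma coord_update_self : coord r (Function.update z i₀ s) i₀ = s := by
  rw [coord_coe, Function.update_self]

lemma Ssum_update_of_le {i : ℕ} (hi : i ≤ i₀) :
    Ssum r κ c i (Function.update z i₀ s) = Ssum r κ c i z :=
  Finset.sum_congr rfl fun k hk => by
    rw [coord_update_of_ne z i₀ s (by have := Finset.mem_range.mp hk; omega)]

lemma vrec_update_of_le {i : ℕ} (hi : i ≤ i₀) :
    vrec r κ c l i (Function.update z i₀ s) = vrec r κ c l i z := by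
  induction i with
  | zero => rfl
  | succ i ih =>
    simp only [vrec]
    rw [Ssum_update_of_le z i₀ s hi, coord_update_of_ne z i₀ s (by omega), ih (by omega)]

lemma Wfun_update_of_le {i : ℕ} (hi : i ≤ i₀) :
    Wfun r κ c l i (Function.update z i₀ s) = Wfun r κ c l i z := by
  cases i with
  | zero => rfl
  | succ i =>
    simp only [Wfun]
    rw [Ssum_update_of_le z i₀ s (by omega), coord_update_of_ne z i₀ s (by omega),
      vrec_update_of_le z i₀ s (by omega)]

end Update

lemma Vfun_update_last {n : ℕ} (κ c : ℝ) (l : ℕ → ℝ) (z : Fin (n + 1) → ℝ) (s : ℝ) :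
    Vfun (n + 1) κ c l (Function.update z (Fin.last n) s) =
      ∑ j ∈ Finset.range n, Wfun (n + 1) κ c l (j + 1) z ^ ((c + 1) / (c + 1 + (j : ℝ) * κ)) +
        sectionW (Ssum (n + 1) κ c n z) (vrec (n + 1) κ c l n z) (c / (1 + (n : ℝ) * κ) + 1) s ^
          ((c + 1) / (c + 1 + (n : ℝ) * κ)) := by
  have hlast : Wfun (n + 1) κ c l (n + 1) (Function.update z (Fin.last n) s) =
      sectionW (Ssum (n + 1) κ c n z) (vrec (n + 1) κ c l n z) (c / (1 + (n : ℝ) * κ) + 1) s := by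
    have hs : coord (n + 1) (Function.update z (Fin.last n) s) n = s := coord_update_self z _ s
    simp only [Wfun, sectionW]
    rw [Ssum_update_of_le (i := n) z _ s (by simp), vrec_update_of_le (i := n) z _ s (by simp), hs]
  rw [Vfun, Finset.sum_range_succ, hlast]
  congr 1
  refine Finset.sum_congr rfl fun j hj => ?_
  rw [Wfun_update_of_le z _ s (by simpa using Finset.mem_range.mp hj)]

section Vanishing

variable {r : ℕ} {κ c : ℝ} {l : ℕ → ℝ} {z : Fin r → ℝ}

lemma Ssum_nonneg (i : ℕ) : 0 ≤ Ssum r κ c i z :=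
  Finset.sum_nonneg fun _ _ => Real.rpow_nonneg (abs_nonneg _) _

lemma coord_eq_zero_of_Ssum_eq_zero {i k : ℕ} (h : Ssum r κ c i z = 0) (hk : k < i) :
    coord r z k = 0 := by
  have hterm := (Finset.sum_eq_zero_iff_of_nonneg fun k _ => Real.rpow_nonneg (abs_nonneg _) _).mp
    h k (Finset.mem_range.mpr hk)
  exact abs_eq_zero.mp ((Real.rpow_eq_zero_iff_of_nonneg (abs_nonneg _)).mp hterm).1

lemma vrec_eq_zero_of_coord_eq_zero {i : ℕ} (h : ∀ k < i, coord r z k = 0) :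
    vrec r κ c l i z = 0 := by
  induction i with
  | zero => rfl
  | succ i ih =>
    simp only [vrec]
    rw [h i i.lt_succ_self, ih fun k hk => h k (hk.trans i.lt_succ_self), sub_zero,
      Real.sign_zero, mul_zero]

lemma coord_eq_vrec_of_Ssum_succ_eq_zero {i : ℕ} (h : Ssum r κ c (i + 1) z = 0) :
    coord r z i = vrec r κ c l i z := by
  rw [coord_eq_zero_of_Ssum_eq_zero h i.lt_succ_self,
    vrec_eq_zero_of_coord_eq_zero fun k hk =>
      coord_eq_zero_of_Ssum_eq_zero h (hk.trans i.lt_succ_self)]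

lemma coord_eq_vrec_of_vrec_succ_eq_zero {i : ℕ} (hl : l (i + 1) ≠ 0)
    (h : vrec r κ c l (i + 1) z = 0) : coord r z i = vrec r κ c l i z := by
  simp only [vrec, mul_eq_zero, neg_eq_zero, Real.sign_eq_zero_iff, sub_eq_zero] at h
  rcases h with (h | h) | h
  · exact absurd h hl
  · exact coord_eq_vrec_of_Ssum_succ_eq_zero
      ((Real.rpow_eq_zero_iff_of_nonneg (Ssum_nonneg _)).mp h).1
  · exact h

end Vanishing

lemma one_add_mul_pos_of_neg_inv_le (n : ℕ) {κ : ℝ} (hκ : -(1 / ((n : ℝ) + 1)) ≤ κ) :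
    0 < 1 + (n : ℝ) * κ := by
  have hn : (0 : ℝ) < n + 1 := by positivity
  have h₁ := mul_le_mul_of_nonneg_left hκ (Nat.cast_nonneg (α := ℝ) n)
  have h₂ : (n : ℝ) * (1 / (n + 1)) < 1 := by rw [mul_one_div, div_lt_one hn]; linarith
  nlinarith

/-- Structural conditions for robustification: at every point where `V_κ` is differentiable
and `z_i ≠ v_{i-1}(z)` for all paper indices `i < r`, one has
`(∂V_κ/∂z_r)(z) · ω_κ(z) ≤ 0`, and `ω_κ(z) = 0` implies `(∂V_κ/∂z_r)(z) = 0`. -/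
theorem stmt15 (r : ℕ) (hr : 1 ≤ r) (κ c : ℝ)
    (hκl : -(1 / (r : ℝ)) ≤ κ)
    (l : ℕ → ℝ) (hl : ∀ i, 1 ≤ i → i ≤ r → 0 < l i)
    (hc : ∀ i, i < r → 1 + (i : ℝ) * κ ≤ c) :
    ∀ z : Fin r → ℝ, DifferentiableAt ℝ (Vfun r κ c l) z →
      (∀ i, i + 1 < r → coord r z i ≠ vrec r κ c l i z) →
      fderiv ℝ (Vfun r κ c l) z (Pi.single (⟨r - 1, by omega⟩ : Fin r) (1 : ℝ)) *
          vrec r κ c l r z ≤ 0 ∧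
      (vrec r κ c l r z = 0 →
        fderiv ℝ (Vfun r κ c l) z (Pi.single (⟨r - 1, by omega⟩ : Fin r) (1 : ℝ)) = 0) := by
  obtain ⟨n, rfl⟩ : ∃ n, r = n + 1 := ⟨r - 1, by omega⟩
  intro z hV _
  have hlast : (⟨n + 1 - 1, by omega⟩ : Fin (n + 1)) = Fin.last n := Fin.ext (by simp)
  rw [hlast]
  have hp : 0 < 1 + (n : ℝ) * κ := one_add_mul_pos_of_neg_inv_le n (by exact_mod_cast hκl)
  have hc₀ : 1 ≤ c := by simpa using hc 0 (by omega)
  have hβ : 0 < c / (1 + (n : ℝ) * κ) + 1 := by positivity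
  have hα : 0 ≤ (c + 1) / (c + 1 + (n : ℝ) * κ) := div_nonneg (by linarith) (by linarith)
  have hA := Ssum_nonneg (r := n + 1) (κ := κ) (c := c) n (z := z)
  have hD := hV.hasDerivAt_update (Fin.last n)
  simp only [Vfun_update_last] at hD
  rw [← coord_coe z (Fin.last n), Fin.val_last] at hD
  have hl₁ : 0 < l (n + 1) := hl (n + 1) (by omega) le_rfl
  refine ⟨?_, fun hω => ?_⟩
  · have hsign := hD.mul_sign_sub_nonneg
      (monotoneOn_const_add_sectionW_rpow _ hA hβ hα)
      (antitoneOn_const_add_sectionW_rpow _ hA hβ hα)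
    have hN := Real.rpow_nonneg (Ssum_nonneg (n + 1) (κ := κ) (c := c) (z := z))
      ((1 + (n : ℝ) * κ + κ) / c)
    simp only [vrec]
    nlinarith [mul_nonneg (mul_nonneg hl₁.le hN) hsign]
  · rw [coord_eq_vrec_of_vrec_succ_eq_zero hl₁.ne' hω] at hD
    exact hD.eq_zero_of_monotoneOn_of_antitoneOn
      (monotoneOn_const_add_sectionW_rpow _ hA hβ hα)
      (antitoneOn_const_add_sectionW_rpow _ hA hβ hα)
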